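/- arXiv:2510.00115 — 2 statements merged into one kernel-verified Lean document; each statement's English description precedes it below -/
import Mathlib

section
/- Let G be a group containing elements x, y, z such that x*y = y*x, x*z*x = z*x*z, and y*z*y = z*y*z. Then (x*y*z)^4 = x^6 * y * b⁻¹*a⁻¹*z*a*b * c⁻¹*z*c * d⁻¹*z*d * y * x⁻¹*z*x, where a = x^5, b = y, c = x^4, d = x^2. (Equivalently, writing g^h := h⁻¹*g*h, one has (x*y*z)^4 = x^6 · y · (z^{x^5})^{y} · z^{x^4} · z^{x^2} · y · z^{x}.) -/
/-- Chain-relation identity abstract from the mapping class group of the 2-holed torus: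
`x, y` commuting Dehn twists, `z` satisfying braid relations with each. -/
theorem stmt_0 {G : Type*} [Group G] (x y z : G)
    (hxy : x * y = y * x) (hxz : x * z * x = z * x * z) (hyz : y * z * y = z * y * z) :
    (x * y * z) ^ 4 =
      x ^ 6 * y * (y⁻¹ * (x ^ 5)⁻¹ * z * x ^ 5 * y) * ((x ^ 4)⁻¹ * z * x ^ 4) *
        ((x ^ 2)⁻¹ * z * x ^ 2) * y * (x⁻¹ * z * x) := by
  have c : Commute x y := hxy
  have h1 : ∀ w : G, x * (y * w) = y * (x * w) := fun w => by
    rw [← mul_assoc, hxy, mul_assoc]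
  have h2 : ∀ w : G, x * (z * (x * w)) = z * (x * (z * w)) := fun w => by
    rw [← mul_assoc, ← mul_assoc, hxz, mul_assoc, mul_assoc]
  have h3 : ∀ w : G, y * (z * (y * w)) = z * (y * (z * w)) := fun w => by
    rw [← mul_assoc, ← mul_assoc, hyz, mul_assoc, mul_assoc]
  have h2e : x * (z * x) = z * (x * z) := by
    rw [← mul_assoc, hxz, mul_assoc]
  have h5 : ∀ w : G, x ^ 5 * (y * w) = y * (x ^ 5 * w) := fun w => by
    rw [← mul_assoc, (c.pow_left 5).eq, mul_assoc]
  have h6 : ∀ w : G, x ^ 2 * (y * w) = y * (x ^ 2 * w) := fun w => by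
    rw [← mul_assoc, (c.pow_left 2).eq, mul_assoc]
  calc (x * y * z) ^ 4 = x * (y * (z * (x * (y * (z * (x * (y * (z * (x * (y * (z))))))))))) := by
          simp only [pow_succ, pow_zero, one_mul, mul_assoc]
    _ = x * (y * (z * (y * (x * (z * (x * (y * (z * (x * (y * (z))))))))))) := by
          conv_lhs => enter [2,2,2]; rw [h1]
    _ = x * (z * (y * (z * (x * (z * (x * (y * (z * (x * (y * (z))))))))))) := by
          conv_lhs => enter [2]; rw [h3]
    _ = x * (z * (y * (x * (z * (x * (x * (y * (z * (x * (y * (z))))))))))) := by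
          conv_lhs => enter [2,2,2]; rw [← h2]
    _ = x * (z * (y * (x * (z * (x * (x * (y * (z * (y * (x * (z))))))))))) := by
          conv_lhs => enter [2,2,2,2,2,2,2,2,2]; rw [h1]
    _ = x * (z * (y * (x * (z * (x * (x * (z * (y * (z * (x * (z))))))))))) := by
          conv_lhs => enter [2,2,2,2,2,2,2]; rw [h3]
    _ = x * (z * (y * (x * (z * (x * (x * (z * (y * (x * (z * (x))))))))))) := by
          conv_lhs => enter [2,2,2,2,2,2,2,2,2]; rw [← h2e]
    _ = x ^ 6 * y * (y⁻¹ * (x ^ 5)⁻¹ * z * x ^ 5 * y) * ((x ^ 4)⁻¹ * z * x ^ 4) *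
        ((x ^ 2)⁻¹ * z * x ^ 2) * y * (x⁻¹ * z * x) := by
          simp only [mul_assoc]
          rw [h5, h6]
          group
          simp only [zpow_two, pow_two]
          simp only [mul_assoc]
end

section
/- In the braid group B_{2n}, let B be the block-crossing braid as above (strands 1, …, n passing under strands n+1, …, 2n). Then for every braid β in the subgroup generated by σ_1, …, σ_{n−1} (i.e., supported on strands 1, …, n), one has β * B = B * s(β), where s is the injective homomorphism from the braid group on strands 1, …, n to B_{2n} sending σ_i to σ_{n+i}. -/
/-- `ascProd σ a b = σ_a * σ_{a+1} * ⋯ * σ_b`. -/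
def ascProd {G : Type*} [Group G] (σ : ℕ → G) (a b : ℕ) : G :=
  ((List.range' a (b + 1 - a)).map σ).prod

/-- `descProd σ a b = σ_b * σ_{b-1} * ⋯ * σ_a`. -/
def descProd {G : Type*} [Group G] (σ : ℕ → G) (a b : ℕ) : G :=
  ((List.range' a (b + 1 - a)).reverse.map σ).prod

/-- The positive half twist `Δ_{a,b} = (σ_a)(σ_{a+1}σ_a)⋯(σ_{b-1}⋯σ_a)` on strands `a,…,b`. -/
def halfTwist {G : Type*} [Group G] (σ : ℕ → G) (a b : ℕ) : G :=
  ((List.range' a (b - a)).map (fun k => descProd σ a k)).prod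

/-- The block-crossing braid on `2n` strands where strands `1,…,n` pass under `n+1,…,2n`:
`B = (σ_n⁻¹⋯σ_1⁻¹)(σ_{n+1}⁻¹⋯σ_2⁻¹)⋯(σ_{2n-1}⁻¹⋯σ_n⁻¹)`. -/
def blockUnder {G : Type*} [Group G] (σ : ℕ → G) (n : ℕ) : G :=
  ((List.range n).map (fun j => (ascProd σ (1 + j) (n + j))⁻¹)).prod

/-- The positive block-crossing braid `(σ_n⋯σ_1)(σ_{n+1}⋯σ_2)⋯(σ_{2n-1}⋯σ_n)`. -/
def blockOver {G : Type*} [Group G] (σ : ℕ → G) (n : ℕ) : G :=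
  ((List.range n).map (fun j => descProd σ (1 + j) (n + j))).prod

/-- Evaluation of a word in the generators `σ` (a letter `(i, true)` is `σ i`,
a letter `(i, false)` is `σ i⁻¹`). -/
def evalWord {G : Type*} [Group G] (σ : ℕ → G) (w : List (ℕ × Bool)) : G :=
  (w.map (fun p => if p.2 then σ p.1 else (σ p.1)⁻¹)).prod

/-- An element commuting with every letter commutes with the product. -/
lemma comm_listProd {G : Type*} [Group G] (σ : ℕ → G) (g : G) (l : List ℕ)
    (h : ∀ x ∈ l, g * σ x = σ x * g) :
    g * (l.map σ).prod = (l.map σ).prod * g := by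
  induction l with
  | nil => simp
  | cons a t ih =>
    simp only [List.map_cons, List.prod_cons, ← mul_assoc, h a (by simp)]
    rw [mul_assoc, ih (fun x hx => h x (by simp [hx])), ← mul_assoc]

lemma ascProd_cons {G : Type*} [Group G] (σ : ℕ → G) (a b : ℕ) (h : a ≤ b) :
    ascProd σ a b = σ a * ascProd σ (a + 1) b := by
  unfold ascProd
  have h1 : b + 1 - a = (b + 1 - (a + 1)) + 1 := by omega
  rw [h1, List.range'_succ]
  simp

/-- Sliding a generator through an ascending run: `σ_{k+1} (σ_a ⋯ σ_b) = (σ_a ⋯ σ_b) σ_k`. -/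
lemma slide_asc {G : Type*} [Group G] (σ : ℕ → G)
    (hb : ∀ i, σ i * σ (i + 1) * σ i = σ (i + 1) * σ i * σ (i + 1))
    (hc : ∀ i j, i + 2 ≤ j → σ i * σ j = σ j * σ i)
    (a k b : ℕ) (h1 : a ≤ k) (h2 : k + 1 ≤ b) :
    σ (k + 1) * ascProd σ a b = ascProd σ a b * σ k := by
  obtain ⟨d, hd⟩ : ∃ d, k - a = d := ⟨_, rfl⟩
  induction d generalizing a with
  | zero =>
    have hak : a = k := by omega
    subst hak
    rw [ascProd_cons σ a b (by omega), ascProd_cons σ (a + 1) b (by omega)]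
    unfold ascProd
    have hcomm : σ a * ((List.range' (a + 1 + 1) (b + 1 - (a + 1 + 1))).map σ).prod
        = ((List.range' (a + 1 + 1) (b + 1 - (a + 1 + 1))).map σ).prod * σ a := by
      apply comm_listProd
      intro x hx
      rw [List.mem_range'_1] at hx
      exact hc a x (by omega)
    calc σ (a + 1) * (σ a * (σ (a + 1) * ((List.range' (a + 1 + 1) (b + 1 - (a + 1 + 1))).map σ).prod))
        = (σ (a + 1) * σ a * σ (a + 1)) * ((List.range' (a + 1 + 1) (b + 1 - (a + 1 + 1))).map σ).prod := by
          group
      _ = (σ a * σ (a + 1) * σ a) * ((List.range' (a + 1 + 1) (b + 1 - (a + 1 + 1))).map σ).prod := by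
          rw [← hb a]
      _ = σ a * (σ (a + 1) * ((List.range' (a + 1 + 1) (b + 1 - (a + 1 + 1))).map σ).prod) * σ a := by
          rw [mul_assoc (σ a * σ (a+1)) (σ a), hcomm]; group
  | succ d ih =>
    have hak : a < k := by omega
    rw [ascProd_cons σ a b (by omega)]
    rw [← mul_assoc, ← hc a (k + 1) (by omega), mul_assoc, ih (a + 1) (by omega) (by omega),
      ← mul_assoc]

/-- Sliding a generator through the partial block. -/
lemma slide_block {G : Type*} [Group G] (n : ℕ) (σ : ℕ → G)
    (hb : ∀ i, σ i * σ (i + 1) * σ i = σ (i + 1) * σ i * σ (i + 1))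
    (hc : ∀ i j, i + 2 ≤ j → σ i * σ j = σ j * σ i)
    (i : ℕ) (hi1 : 1 ≤ i) (hi2 : i ≤ n - 1) (hn : 1 ≤ n) :
    ∀ m j, σ (i + j) * ((List.range' j m).map (fun l => (ascProd σ (1 + l) (n + l))⁻¹)).prod
      = ((List.range' j m).map (fun l => (ascProd σ (1 + l) (n + l))⁻¹)).prod * σ (i + j + m) := by
  intro m
  induction m with
  | zero => simp
  | succ m ih =>
    intro j
    rw [List.range'_succ]
    simp only [List.map_cons, List.prod_cons]
    have hslide : σ (i + j) * (ascProd σ (1 + j) (n + j))⁻¹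
        = (ascProd σ (1 + j) (n + j))⁻¹ * σ (i + j + 1) := by
      have := slide_asc σ hb hc (1 + j) (i + j) (n + j) (by omega) (by omega)
      calc σ (i + j) * (ascProd σ (1 + j) (n + j))⁻¹
          = (ascProd σ (1 + j) (n + j))⁻¹ * (ascProd σ (1 + j) (n + j) * σ (i + j)) *
            (ascProd σ (1 + j) (n + j))⁻¹ := by group
        _ = (ascProd σ (1 + j) (n + j))⁻¹ * (σ (i + j + 1) * ascProd σ (1 + j) (n + j)) *
            (ascProd σ (1 + j) (n + j))⁻¹ := by rw [← this]
        _ = (ascProd σ (1 + j) (n + j))⁻¹ * σ (i + j + 1) := by group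
    rw [← mul_assoc, hslide, mul_assoc]
    have := ih (j + 1)
    have h2 : i + (j + 1) = i + j + 1 := by omega
    rw [h2] at this
    rw [this, ← mul_assoc]
    congr 2
    omega

lemma gen_slide {G : Type*} [Group G] (n : ℕ) (hn : 1 ≤ n) (σ : ℕ → G)
    (hb : ∀ i, σ i * σ (i + 1) * σ i = σ (i + 1) * σ i * σ (i + 1))
    (hc : ∀ i j, i + 2 ≤ j → σ i * σ j = σ j * σ i)
    (i : ℕ) (hi1 : 1 ≤ i) (hi2 : i ≤ n - 1) :
    σ i * blockUnder σ n = blockUnder σ n * σ (n + i) := by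
  have := slide_block n σ hb hc i hi1 hi2 hn n 0
  simpa [blockUnder, List.range_eq_range', Nat.add_comm] using this

/-- In `B_{2n}`: any braid `β` supported on strands `1,…,n` (a word in `σ_1,…,σ_{n-1}`) slides
through the block-crossing braid `B` to the corresponding braid `s(β)` on strands `n+1,…,2n`,
where `s` is the shift homomorphism `σ_i ↦ σ_{n+i}`: `β * B = B * s(β)`. -/
theorem stmt_3 {G : Type*} [Group G] (n : ℕ) (hn : 1 ≤ n) (σ : ℕ → G)
    (hb : ∀ i, σ i * σ (i + 1) * σ i = σ (i + 1) * σ i * σ (i + 1))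
    (hc : ∀ i j, i + 2 ≤ j → σ i * σ j = σ j * σ i)
    (w : List (ℕ × Bool)) (hw : ∀ p ∈ w, 1 ≤ p.1 ∧ p.1 ≤ n - 1) :
    evalWord σ w * blockUnder σ n = blockUnder σ n * evalWord (fun i => σ (n + i)) w := by
  induction w with
  | nil => simp [evalWord]
  | cons p t ih =>
    have hp := hw p (by simp)
    have hgen := gen_slide n hn σ hb hc p.1 hp.1 hp.2
    have hih := ih (fun q hq => hw q (by simp [hq]))
    simp only [evalWord, List.map_cons, List.prod_cons] at *
    obtain ⟨j, b⟩ := p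
    have hlet : (if b then σ j else (σ j)⁻¹) * blockUnder σ n
        = blockUnder σ n * (if b then σ (n + j) else (σ (n + j))⁻¹) := by
      cases b
      · show (σ j)⁻¹ * blockUnder σ n = blockUnder σ n * (σ (n + j))⁻¹
        calc (σ j)⁻¹ * blockUnder σ n
            = (σ j)⁻¹ * (blockUnder σ n * σ (n + j)) * (σ (n + j))⁻¹ := by group
          _ = (σ j)⁻¹ * (σ j * blockUnder σ n) * (σ (n + j))⁻¹ := by rw [← hgen]
          _ = blockUnder σ n * (σ (n + j))⁻¹ := by group
      · simpa using hgen
    rw [mul_assoc, hih, ← mul_assoc, hlet, mul_assoc]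
end
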